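/- Assume f : ℝⁿ × ℝ^d → ℝⁿ is continuous and, for every ε > 0, Lipschitz in its first variable uniformly in the second on B(0,ε). For each k ∈ ℕ let z^k = (x^k, u^k, a^k) be a triple of W^{1,2} functions on [0,T] such that −ẋ^k(t) ∈ N(x^k(t) − u^k(t); C) + f(x^k(t), a^k(t)) for a.e. t ∈ [0,T]. Suppose z^k → z̄ = (x̄, ū, ā) uniformly on [0,T], where z̄ is of class W^{1,2}, and ż^k → ż̄ weakly in L²([0,T];ℝ^{2n+d}) (i.e., ∫₀ᵀ ⟨ż^k(t) − ż̄(t), g(t)⟩ dt → 0 for every g ∈ L²). Then x̄(t) − ū(t) ∈ C for all t ∈ [0,T] and −ẋ̄(t) ∈ N(x̄(t) − ū(t); C) + f(x̄(t), ā(t)) for a.e. t ∈ [0,T]. -/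

import Mathlib

open MeasureTheory Set Metric Filter
open scoped Pointwise RealInnerProductSpace Topology

/-- `ℝⁿ` with the Euclidean norm. -/
abbrev En (n : ℕ) := EuclideanSpace ℝ (Fin n)

/-- A function `g : [0,T] → E` is of class `W^{1,2}([0,T]; E)` with L² derivative `dg`. -/
def IsW12On {E : Type*} [NormedAddCommGroup E] [NormedSpace ℝ E]
    (g dg : ℝ → E) (T : ℝ) : Prop :=
  MemLp dg 2 (volume.restrict (Set.Icc 0 T)) ∧
  ∀ t ∈ Set.Icc (0 : ℝ) T, g t = g 0 + ∫ s in (0:ℝ)..t, dg s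

/-- Normal cone to a convex set `C` at `x` (empty when `x ∉ C`). -/
def normalCone {n : ℕ} (C : Set (En n)) (x : En n) : Set (En n) :=
  {v | x ∈ C ∧ ∀ y ∈ C, ⟪v, y - x⟫ ≤ 0}

/-!
Write `p = x - u` and `v = -ẋ - f(x, a)`, so that the inclusion says `v(t) ∈ N(p(t); C)`.
As `x^k - u^k ∈ C` a.e., its uniform limit `p̄` lies in the closed cone `C` a.e., hence
everywhere on `[0, T]` by continuity. Uniform convergence and continuity of `f` make `f(x^k, a^k)` and `p^k`
converge strongly in `L²`, hence `v^k ⇀ v̄` weakly. Weakly convergent sequences are bounded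
(Banach–Steinhaus), so for `y ∈ C` and measurable `s` the pairings `∫_s ⟪v^k, y - p^k⟫ ≤ 0`
pass to the limit; as `s` is arbitrary, `⟪v̄(t), y - p̄(t)⟫ ≤ 0` a.e., and letting `y` range
over a countable dense subset of `C` gives `v̄(t) ∈ N(p̄(t); C)` for a.e. `t`.
-/

theorem Set.mem_add_singleton_iff_sub_mem {G : Type*} [AddGroup G] {s : Set G} {a b : G} :
    a ∈ s + {b} ↔ a - b ∈ s := by
  simp [Set.add_singleton, sub_eq_add_neg]

theorem tendstoUniformlyOn_of_forall_norm_sub_le {ι X E : Type*} [SemilatticeSup ι]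
    [Nonempty ι] [SeminormedAddCommGroup E] {F : ι → X → E} {F₀ : X → E} {s : Set X}
    (h : ∀ δ > (0 : ℝ), ∃ N, ∀ k ≥ N, ∀ t ∈ s, ‖F k t - F₀ t‖ ≤ δ) :
    TendstoUniformlyOn F F₀ atTop s := by
  refine Metric.tendstoUniformlyOn_iff.2 fun ε hε => ?_
  filter_upwards [eventually_atTop.2 (h (ε / 2) (half_pos hε))] with k hk t ht
  rw [dist_comm, dist_eq_norm]
  linarith [hk t ht]

theorem Continuous.comp_tendstoUniformlyOn_of_isBounded {ι X Y Z : Type*}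
    [PseudoMetricSpace Y] [ProperSpace Y] [UniformSpace Z] {l : Filter ι} {F : ι → X → Y}
    {F₀ : X → Y} {s : Set X} {g : Y → Z} (hg : Continuous g) (hb : Bornology.IsBounded (F₀ '' s))
    (h : TendstoUniformlyOn F F₀ l s) :
    TendstoUniformlyOn (fun i t => g (F i t)) (fun t => g (F₀ t)) l s := by
  have hK : IsCompact (cthickening 1 (F₀ '' s)) := isCompact_of_isClosed_isBounded isClosed_cthickening hb.cthickening
  refine (hK.uniformContinuousOn_of_continuous hg.continuousOn).comp_tendstoUniformlyOn_eventually
    ?_ (fun t ht => self_subset_cthickening _ (mem_image_of_mem F₀ ht)) h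
  filter_upwards [Metric.tendstoUniformlyOn_iff.1 h 1 one_pos] with i hi t ht
  exact mem_cthickening_of_dist_le _ (F₀ t) 1 _ (mem_image_of_mem F₀ ht)
    (dist_comm (F₀ t) _ ▸ (hi t ht).le)

theorem IsW12On.continuousOn {E : Type*} [NormedAddCommGroup E] [NormedSpace ℝ E]
    [CompleteSpace E] {g dg : ℝ → E} {T : ℝ} (h : IsW12On g dg T) :
    ContinuousOn g (Icc 0 T) := by
  rcases lt_or_ge T 0 with hT | hT
  · simp [Icc_eq_empty_of_lt hT]
  have hint : IntegrableOn dg (uIcc 0 T) := by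
    rw [uIcc_of_le hT]
    exact h.1.integrable one_le_two
  exact ((continuousOn_const.add (intervalIntegral.continuousOn_primitive_interval hint)).mono
    Icc_subset_uIcc).congr h.2

theorem ContinuousOn.forall_mem_Icc_of_ae_mem {X : Type*} [TopologicalSpace X] {g : ℝ → X}
    {a b : ℝ} {C : Set X} (hab : a < b) (hg : ContinuousOn g (Icc a b)) (hC : IsClosed C)
    (h : ∀ᵐ t ∂(volume.restrict (Icc a b)), g t ∈ C) : ∀ t ∈ Icc a b, g t ∈ C := by
  have hopen : IsOpen (Ioo a b ∩ g ⁻¹' Cᶜ) :=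
    (hg.mono Ioo_subset_Icc_self).isOpen_inter_preimage isOpen_Ioo hC.isOpen_compl
  have hnull : volume (Ioo a b ∩ g ⁻¹' Cᶜ) = 0 := by
    rw [ae_restrict_iff' measurableSet_Icc, ae_iff] at h
    exact measure_mono_null (fun t ht => Classical.not_imp.2 ⟨Ioo_subset_Icc_self ht.1, ht.2⟩) h
  have hIoo : g '' Ioo a b ⊆ C := by
    rintro _ ⟨t, ht, rfl⟩
    by_contra hgt
    exact ((hopen.measure_eq_zero_iff volume).1 hnull).subset ⟨ht, hgt⟩
  rw [← closure_Ioo hab.ne] at hg ⊢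
  intro t ht
  exact hC.closure_subset_iff.2 hIoo (hg.image_closure (mem_image_of_mem g ht))

theorem ContinuousOn.memLp_Icc {E : Type*} [NormedAddCommGroup E] {g : ℝ → E} {a b : ℝ}
    (hg : ContinuousOn g (Icc a b)) (p : ENNReal) : MemLp g p (volume.restrict (Icc a b)) := by
  obtain ⟨C, hC⟩ := isCompact_Icc.exists_bound_of_continuousOn hg
  exact MemLp.of_bound (hg.aestronglyMeasurable measurableSet_Icc) C
    ((ae_restrict_iff' measurableSet_Icc).2 (Eventually.of_forall hC))

theorem tendsto_inner_of_weak_of_tendsto {H : Type*} [NormedAddCommGroup H]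
    [InnerProductSpace ℝ H] [CompleteSpace H] {w z : ℕ → H} {w₀ z₀ : H}
    (hw : ∀ g, Tendsto (fun k => ⟪w k, g⟫) atTop (𝓝 ⟪w₀, g⟫))
    (hz : Tendsto z atTop (𝓝 z₀)) :
    Tendsto (fun k => ⟪w k, z k⟫) atTop (𝓝 ⟪w₀, z₀⟫) := by
  obtain ⟨M, hM⟩ : ∃ M, ∀ k, ‖innerSL ℝ (w k)‖ ≤ M :=
    banach_steinhaus fun g => ((hw g).norm.bddAbove_range).imp fun _ hC k => hC ⟨k, rfl⟩
  have hsmall : Tendsto (fun k => ⟪w k, z k - z₀⟫) atTop (𝓝 0) := by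
    refine squeeze_zero_norm (fun k => (norm_inner_le_norm _ _).trans
      (mul_le_mul_of_nonneg_right ((innerSL_apply_norm ℝ (w k)).symm.trans_le (hM k))
        (norm_nonneg _))) ?_
    simpa using (tendsto_sub_nhds_zero_iff.2 hz).norm.const_mul M
  simpa [inner_sub_right] using (hw z₀).add hsmall

section L2

variable {α E : Type*} [MeasurableSpace α] {μ : Measure α} [NormedAddCommGroup E]

theorem MeasureTheory.MemLp.inner_toLp [InnerProductSpace ℝ E] {f : α → E}
    (hf : MemLp f 2 μ) (g : Lp E 2 μ) : ⟪hf.toLp f, g⟫ = ∫ t, ⟪f t, g t⟫ ∂μ := by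
  rw [L2.inner_def]
  exact integral_congr_ae (by filter_upwards [hf.coeFn_toLp] with t ht; rw [ht])

theorem tendsto_toLp_of_tendstoUniformlyOn {ι : Type*} {l : Filter ι} {p : ENNReal}
    [Fact (1 ≤ p)] {s : Set α} [IsFiniteMeasure (μ.restrict s)] (hs : MeasurableSet s)
    {F : ι → α → E} {F₀ : α → E}
    (hF : ∀ i, MemLp (F i) p (μ.restrict s)) (hF₀ : MemLp F₀ p (μ.restrict s))
    (h : TendstoUniformlyOn F F₀ l s) :
    Tendsto (fun i => (hF i).toLp (F i)) l (𝓝 (hF₀.toLp F₀)) := by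
  set c : ℝ := measureUnivNNReal (μ.restrict s) ^ p.toReal⁻¹
  refine Metric.tendsto_nhds.2 fun ε hε => ?_
  filter_upwards [Metric.tendstoUniformlyOn_iff.1 h (ε / (c + 1)) (by positivity)] with i hi
  rw [dist_eq_norm, ← MemLp.toLp_sub]
  calc ‖((hF i).sub hF₀).toLp (F i - F₀)‖ ≤ c * (ε / (c + 1)) := by
        refine Lp.norm_le_of_ae_bound (by positivity) ?_
        filter_upwards [((hF i).sub hF₀).coeFn_toLp, ae_restrict_mem hs] with t ht hts
        rw [ht, Pi.sub_apply, ← dist_eq_norm, dist_comm]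
        exact (hi t hts).le
    _ < ε := by
        rw [mul_div_assoc', div_lt_iff₀ (by positivity)]
        nlinarith

variable [IsFiniteMeasure μ]

theorem tendsto_toLp_indicator_const_sub {s : Set α} (hs : MeasurableSet s) (y : E)
    {P : ℕ → Lp E 2 μ} {P₀ : Lp E 2 μ} (hP : Tendsto P atTop (𝓝 P₀)) :
    Tendsto (fun k => (((memLp_const y).sub (Lp.memLp (P k))).indicator hs).toLp _) atTop
      (𝓝 ((((memLp_const y).sub (Lp.memLp P₀)).indicator hs).toLp _)) := by
  rw [Lp.tendsto_Lp_iff_tendsto_eLpNorm'']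
  rw [Lp.tendsto_Lp_iff_tendsto_eLpNorm'] at hP
  refine tendsto_of_tendsto_of_tendsto_of_le_of_le tendsto_const_nhds hP (fun _ => zero_le)
    fun k => ?_
  calc _ = eLpNorm (s.indicator (⇑P₀ - ⇑(P k))) 2 μ := by
        congr 1
        ext t
        by_cases ht : t ∈ s <;> simp [ht]
    _ ≤ eLpNorm (⇑(P k) - ⇑P₀) 2 μ :=
        eLpNorm_sub_comm (P k : α → E) P₀ 2 μ ▸ eLpNorm_indicator_le _

variable [InnerProductSpace ℝ E] [CompleteSpace E]

theorem ae_inner_sub_nonpos_of_weak_of_tendsto {V P : ℕ → Lp E 2 μ} {V₀ P₀ : Lp E 2 μ}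
    (y : E)
    (hV : ∀ g, Tendsto (fun k => ⟪V k, g⟫) atTop (𝓝 ⟪V₀, g⟫)) (hP : Tendsto P atTop (𝓝 P₀))
    (hVP : ∀ k, ∀ᵐ t ∂μ, ⟪V k t, y - P k t⟫ ≤ 0) :
    ∀ᵐ t ∂μ, ⟪V₀ t, y - P₀ t⟫ ≤ 0 := by
  have hpair : ∀ (W Q : Lp E 2 μ) {s : Set α} (hs : MeasurableSet s),
      ⟪W, (((memLp_const y).sub (Lp.memLp Q)).indicator hs).toLp _⟫ =
        ∫ t in s, ⟪W t, y - Q t⟫ ∂μ := by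
    intro W Q s hs
    rw [real_inner_comm, MemLp.inner_toLp, ← integral_indicator hs]
    congr 1
    ext t
    by_cases ht : t ∈ s <;> simp [ht, real_inner_comm]
  have hint : Integrable (fun t => ⟪V₀ t, y - P₀ t⟫) μ := by
    have hyP := (memLp_const y).sub (Lp.memLp P₀)
    refine (L2.integrable_inner V₀ (hyP.toLp _)).congr ?_
    filter_upwards [hyP.coeFn_toLp] with t ht
    rw [ht]
    rfl
  refine ae_le_of_forall_setIntegral_le hint (integrable_zero _ _ _) fun s hs _ => ?_
  rw [integral_zero, ← hpair V₀ P₀ hs]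
  refine le_of_tendsto' (tendsto_inner_of_weak_of_tendsto hV
    (tendsto_toLp_indicator_const_sub hs y hP)) fun k => ?_
  rw [hpair (V k) (P k) hs]
  exact integral_nonpos_of_ae (ae_restrict_of_ae (hVP k))

theorem ae_forall_inner_sub_nonpos_of_weak_of_tendsto [TopologicalSpace.SeparableSpace E]
    {C : Set E} {V P : ℕ → Lp E 2 μ} {V₀ P₀ : Lp E 2 μ}
    (hV : ∀ g, Tendsto (fun k => ⟪V k, g⟫) atTop (𝓝 ⟪V₀, g⟫)) (hP : Tendsto P atTop (𝓝 P₀))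
    (hVP : ∀ k, ∀ᵐ t ∂μ, ∀ y ∈ C, ⟪V k t, y - P k t⟫ ≤ 0) :
    ∀ᵐ t ∂μ, ∀ y ∈ C, ⟪V₀ t, y - P₀ t⟫ ≤ 0 := by
  obtain ⟨D, hDC, hD, hCD⟩ :=
    (TopologicalSpace.IsSeparable.of_separableSpace C).exists_countable_dense_subset
  have hDae : ∀ᵐ t ∂μ, ∀ y ∈ D, ⟪V₀ t, y - P₀ t⟫ ≤ 0 :=
    (ae_ball_iff hD).2 fun y hy => ae_inner_sub_nonpos_of_weak_of_tendsto y hV hP fun k =>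
      (hVP k).mono fun t ht => ht y (hDC hy)
  filter_upwards [hDae] with t ht y hy
  have hclosed : IsClosed {y | ⟪V₀ t, y - P₀ t⟫ ≤ 0} :=
    isClosed_le (by fun_prop) continuous_const
  exact hclosed.closure_subset_iff.2 ht (hCD hy)

theorem ae_neg_mem_normalCone_add_of_weak_of_tendsto {n : ℕ} {C : Set (En n)}
    {dx F p : ℕ → α → En n} {dx₀ F₀ p₀ : α → En n}
    (hdx : ∀ k, MemLp (dx k) 2 μ) (hdx₀ : MemLp dx₀ 2 μ) (hF : ∀ k, MemLp (F k) 2 μ)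
    (hF₀ : MemLp F₀ 2 μ) (hp : ∀ k, MemLp (p k) 2 μ) (hp₀ : MemLp p₀ 2 μ)
    (hdx_weak : ∀ g,
      Tendsto (fun k => ⟪(hdx k).toLp (dx k), g⟫) atTop (𝓝 ⟪hdx₀.toLp dx₀, g⟫))
    (hF_lim : Tendsto (fun k => (hF k).toLp (F k)) atTop (𝓝 (hF₀.toLp F₀)))
    (hp_lim : Tendsto (fun k => (hp k).toLp (p k)) atTop (𝓝 (hp₀.toLp p₀)))
    (hincl : ∀ k, ∀ᵐ t ∂μ, -dx k t ∈ normalCone C (p k t) + {F k t})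
    (hp₀C : ∀ᵐ t ∂μ, p₀ t ∈ C) :
    ∀ᵐ t ∂μ, -dx₀ t ∈ normalCone C (p₀ t) + {F₀ t} := by
  have hv : ∀ k, MemLp (-dx k - F k) 2 μ := fun k => (hdx k).neg.sub (hF k)
  have hv₀ : MemLp (-dx₀ - F₀) 2 μ := hdx₀.neg.sub hF₀
  have hv_weak : ∀ g, Tendsto (fun k => ⟪(hv k).toLp _, g⟫) atTop (𝓝 ⟪hv₀.toLp _, g⟫) := by
    intro g
    have h := (hdx_weak g).neg.sub (hF_lim.inner (tendsto_const_nhds (x := g)))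
    simp only [← inner_neg_left, ← inner_sub_left, ← MemLp.toLp_neg, ← MemLp.toLp_sub] at h
    exact h
  have hcone := ae_forall_inner_sub_nonpos_of_weak_of_tendsto hv_weak hp_lim fun k => by
    filter_upwards [hincl k, (hv k).coeFn_toLp, (hp k).coeFn_toLp] with t ht hvt hpt
    rw [hvt, hpt]
    exact (Set.mem_add_singleton_iff_sub_mem.1 ht).2
  filter_upwards [hcone, hp₀C, hv₀.coeFn_toLp, hp₀.coeFn_toLp] with t ht hpC hvt hpt
  rw [hvt, hpt] at ht
  exact Set.mem_add_singleton_iff_sub_mem.2 ⟨hpC, ht⟩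

end L2

theorem sweeping_dynamics_closedness_general
    (n m d : ℕ) (T : ℝ) (hT : 0 < T)
    (xstar : Fin m → En n) (C : Set (En n))
    (hC : C = {x : En n | ∀ i, ⟪xstar i, x⟫ ≤ 0})
    (f : En n → En d → En n)
    (hf_cont : Continuous fun p : En n × En d => f p.1 p.2)
    -- the sequence of solutions
    (xk dxk uk duk : ℕ → ℝ → En n) (ak dak : ℕ → ℝ → En d)
    (hW12k : ∀ k : ℕ, IsW12On (xk k) (dxk k) T ∧ IsW12On (uk k) (duk k) T ∧
      IsW12On (ak k) (dak k) T)
    (hinclk : ∀ k : ℕ, ∀ᵐ t ∂(volume.restrict (Set.Icc (0:ℝ) T)),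
      -dxk k t ∈ normalCone C (xk k t - uk k t) + {f (xk k t) (ak k t)})
    -- the limit triple
    (xb dxb ub dub : ℝ → En n) (ab dab : ℝ → En d)
    (hW12 : IsW12On xb dxb T ∧ IsW12On ub dub T ∧ IsW12On ab dab T)
    -- uniform convergence on `[0,T]`
    (hunif : ∀ δ > (0:ℝ), ∃ N : ℕ, ∀ k ≥ N, ∀ t ∈ Set.Icc (0:ℝ) T,
      ‖xk k t - xb t‖ ≤ δ ∧ ‖uk k t - ub t‖ ≤ δ ∧ ‖ak k t - ab t‖ ≤ δ)
    -- weak `L²` convergence of the derivatives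
    (hweak : ∀ (gx gu : ℝ → En n) (ga : ℝ → En d),
      MemLp gx 2 (volume.restrict (Set.Icc (0:ℝ) T)) →
      MemLp gu 2 (volume.restrict (Set.Icc (0:ℝ) T)) →
      MemLp ga 2 (volume.restrict (Set.Icc (0:ℝ) T)) →
      Tendsto (fun k : ℕ => ∫ t in (0:ℝ)..T,
        (⟪dxk k t - dxb t, gx t⟫ + ⟪duk k t - dub t, gu t⟫ + ⟪dak k t - dab t, ga t⟫))
        atTop (𝓝 0)) :
    (∀ t ∈ Set.Icc (0:ℝ) T, xb t - ub t ∈ C) ∧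
    (∀ᵐ t ∂(volume.restrict (Set.Icc (0:ℝ) T)),
      -dxb t ∈ normalCone C (xb t - ub t) + {f (xb t) (ab t)}) := by
  have hCclosed : IsClosed C := by
    rw [hC, ofPred_forall]
    exact isClosed_iInter fun i => isClosed_le (by fun_prop) continuous_const
  obtain ⟨hxb, hub, hab⟩ := hW12
  have hx : TendstoUniformlyOn xk xb atTop (Icc 0 T) := tendstoUniformlyOn_of_forall_norm_sub_le
    fun δ hδ => (hunif δ hδ).imp fun N hN k hk t ht => (hN k hk t ht).1
  have hu : TendstoUniformlyOn uk ub atTop (Icc 0 T) := tendstoUniformlyOn_of_forall_norm_sub_le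
    fun δ hδ => (hunif δ hδ).imp fun N hN k hk t ht => (hN k hk t ht).2.1
  have hxa : TendstoUniformlyOn (fun k t => (xk k t, ak k t)) (fun t => (xb t, ab t)) atTop
      (Icc 0 T) := tendstoUniformlyOn_of_forall_norm_sub_le fun δ hδ => (hunif δ hδ).imp
    fun N hN k hk t ht => by simpa [Prod.norm_def] using max_le (hN k hk t ht).1 (hN k hk t ht).2.2
  have hp := hx.fun_sub hu
  have hF := hf_cont.comp_tendstoUniformlyOn_of_isBounded
    (isCompact_Icc.image_of_continuousOn (hxb.continuousOn.prodMk hab.continuousOn)).isBounded hxa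
  have hmem : ∀ t ∈ Icc 0 T, xb t - ub t ∈ C := by
    refine (hxb.continuousOn.sub hub.continuousOn).forall_mem_Icc_of_ae_mem hT hCclosed ?_
    filter_upwards [ae_all_iff.2 hinclk, ae_restrict_mem measurableSet_Icc] with t hk ht
    exact hCclosed.mem_of_tendsto (hp.tendsto_at ht)
      (Eventually.of_forall fun k => (Set.mem_add_singleton_iff_sub_mem.1 (hk k)).1)
  have hpk k := ((hW12k k).1.continuousOn.sub (hW12k k).2.1.continuousOn).memLp_Icc 2
  have hp₀ := (hxb.continuousOn.sub hub.continuousOn).memLp_Icc 2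
  have hFk k := (hf_cont.comp_continuousOn
    ((hW12k k).1.continuousOn.prodMk (hW12k k).2.2.continuousOn)).memLp_Icc 2
  have hF₀ := (hf_cont.comp_continuousOn (hxb.continuousOn.prodMk hab.continuousOn)).memLp_Icc 2
  refine ⟨hmem, ae_neg_mem_normalCone_add_of_weak_of_tendsto (fun k => (hW12k k).1.1) hxb.1
    hFk hF₀ hpk hp₀ (fun g => ?_) (tendsto_toLp_of_tendstoUniformlyOn measurableSet_Icc hFk hF₀ hF)
    (tendsto_toLp_of_tendstoUniformlyOn measurableSet_Icc hpk hp₀ hp) hinclk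
    ((ae_restrict_iff' measurableSet_Icc).2 (Eventually.of_forall hmem))⟩
  rw [← tendsto_sub_nhds_zero_iff]
  refine (hweak g 0 0 (Lp.memLp g) MemLp.zero MemLp.zero).congr fun k => ?_
  rw [← inner_sub_left, ← MemLp.toLp_sub, MemLp.inner_toLp, intervalIntegral.integral_of_le hT.le,
    ← integral_Icc_eq_integral_Ioc]
  simp

/-- closedness of the perturbed sweeping dynamics under uniform convergence
of trajectories and weak `L²` convergence of derivatives. -/
theorem sweeping_dynamics_closedness
    (n m d : ℕ) (T : ℝ) (hT : 0 < T)
    (xstar : Fin m → En n) (C : Set (En n))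
    (hC : C = {x : En n | ∀ i, ⟪xstar i, x⟫ ≤ 0})
    (f : En n → En d → En n)
    (hf_cont : Continuous fun p : En n × En d => f p.1 p.2)
    (hf_lip : ∀ ε > (0:ℝ), ∃ K > (0:ℝ), ∀ (x y : En n) (a : En d),
      ‖x‖ ≤ ε → ‖y‖ ≤ ε → ‖f x a - f y a‖ ≤ K * ‖x - y‖)
    -- the sequence of solutions
    (xk dxk uk duk : ℕ → ℝ → En n) (ak dak : ℕ → ℝ → En d)
    (hW12k : ∀ k : ℕ, IsW12On (xk k) (dxk k) T ∧ IsW12On (uk k) (duk k) T ∧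
      IsW12On (ak k) (dak k) T)
    (hinclk : ∀ k : ℕ, ∀ᵐ t ∂(volume.restrict (Set.Icc (0:ℝ) T)),
      -dxk k t ∈ normalCone C (xk k t - uk k t) + {f (xk k t) (ak k t)})
    -- the limit triple
    (xb dxb ub dub : ℝ → En n) (ab dab : ℝ → En d)
    (hW12 : IsW12On xb dxb T ∧ IsW12On ub dub T ∧ IsW12On ab dab T)
    -- uniform convergence on `[0,T]`
    (hunif : ∀ δ > (0:ℝ), ∃ N : ℕ, ∀ k ≥ N, ∀ t ∈ Set.Icc (0:ℝ) T,
      ‖xk k t - xb t‖ ≤ δ ∧ ‖uk k t - ub t‖ ≤ δ ∧ ‖ak k t - ab t‖ ≤ δ)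
    -- weak `L²` convergence of the derivatives
    (hweak : ∀ (gx gu : ℝ → En n) (ga : ℝ → En d),
      MemLp gx 2 (volume.restrict (Set.Icc (0:ℝ) T)) →
      MemLp gu 2 (volume.restrict (Set.Icc (0:ℝ) T)) →
      MemLp ga 2 (volume.restrict (Set.Icc (0:ℝ) T)) →
      Tendsto (fun k : ℕ => ∫ t in (0:ℝ)..T,
        (⟪dxk k t - dxb t, gx t⟫ + ⟪duk k t - dub t, gu t⟫ + ⟪dak k t - dab t, ga t⟫))
        atTop (𝓝 0)) :
    (∀ t ∈ Set.Icc (0:ℝ) T, xb t - ub t ∈ C) ∧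
    (∀ᵐ t ∂(volume.restrict (Set.Icc (0:ℝ) T)),
      -dxb t ∈ normalCone C (xb t - ub t) + {f (xb t) (ab t)}) :=
  sweeping_dynamics_closedness_general n m d T hT xstar C hC f hf_cont xk dxk uk duk ak dak hW12k
    hinclk xb dxb ub dub ab dab hW12 hunif hweak
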